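/- For every natural number n, ∑_{k=1}^{n} (−1)^{k−1} · (C(n,k)/(k+1)) · H_k² = (3·H_n^{(2)} − H_n²) / (2(n+1)), as an identity of real numbers. -/

import Mathlib

/-! Let `T f n = ∑ₖ (-1)^k C(n,k) f k` (`altBinomSum`). Pascal's rule gives
`T f (n+1) = T f n - T (f ∘ succ) n`, and absorption `C(n,k)/(k+1) = C(n+1,k+1)/(n+1)` gives
`T (k ↦ F (k+1)/(k+1)) n = (F 0 - T F (n+1))/(n+1)`. Since `H (k+1) = H k + 1/(k+1)`, these two
rules compute `T` at `1/(k+1)`, `1/k`, `H`, `1/k²`, `H k/k` and `H²` in turn. The sum in the theorem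
is `-T (k ↦ H k²/(k+1)) n`, which absorption turns into `T` at `H (k-1)² = (H k - 1/k)²`
evaluated at `n+1`. -/

open Finset

noncomputable def H : ℕ → ℝ := fun m => ∑ j ∈ range m, (1 : ℝ) / (j + 1)

noncomputable def H2 : ℕ → ℝ := fun m => ∑ j ∈ range m, (1 : ℝ) / ((j : ℝ) + 1) ^ 2

section AltBinomSum

variable {R : Type*} [CommRing R]

def altBinomSum (f : ℕ → R) (n : ℕ) : R :=
  ∑ k ∈ range (n + 1), (-1) ^ k * (n.choose k : R) * f k

@[simp]
lemma altBinomSum_zero (f : ℕ → R) : altBinomSum f 0 = f 0 := by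
  simp [altBinomSum]

lemma altBinomSum_succ (f : ℕ → R) (n : ℕ) :
    altBinomSum f (n + 1) = altBinomSum f n - altBinomSum (fun k => f (k + 1)) n := by
  have hreindex : altBinomSum f n =
      f 0 + ∑ k ∈ range (n + 1), (-1) ^ (k + 1) * (n.choose (k + 1) : R) * f (k + 1) := by
    rw [altBinomSum, sum_range_succ', sum_range_succ _ n]
    simp [add_comm]
  rw [altBinomSum, sum_range_succ', hreindex, altBinomSum, sub_eq_add_neg, ← sum_neg_distrib]
  simp only [Nat.choose_succ_succ', Nat.cast_add, mul_add, add_mul, sum_add_distrib]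
  simp only [pow_succ, mul_neg, mul_one, neg_mul, sum_neg_distrib, pow_zero,
    Nat.choose_zero_right, Nat.cast_one, one_mul]
  ring

lemma altBinomSum_add (f g : ℕ → R) (n : ℕ) :
    altBinomSum (fun k => f k + g k) n = altBinomSum f n + altBinomSum g n := by
  simp only [altBinomSum, mul_add, sum_add_distrib]

lemma altBinomSum_sub (f g : ℕ → R) (n : ℕ) :
    altBinomSum (fun k => f k - g k) n = altBinomSum f n - altBinomSum g n := by
  simp only [altBinomSum, mul_sub, sum_sub_distrib]

lemma altBinomSum_const_mul (c : R) (f : ℕ → R) (n : ℕ) :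
    altBinomSum (fun k => c * f k) n = c * altBinomSum f n := by
  simp only [altBinomSum, mul_sum]
  exact sum_congr rfl fun k _ => by ring

lemma altBinomSum_const_succ (c : R) (n : ℕ) : altBinomSum (fun _ => c) (n + 1) = 0 := by
  rw [altBinomSum_succ, sub_self]

lemma sum_Icc_neg_one_pow_pred_mul_choose (f : ℕ → R) (hf : f 0 = 0) (n : ℕ) :
    ∑ k ∈ Icc 1 n, (-1) ^ (k - 1) * (n.choose k : R) * f k = -altBinomSum f n := by
  rw [← Ico_add_one_right_eq_Icc, sum_Ico_eq_sum_range, altBinomSum, sum_range_succ']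
  simp [hf, pow_succ, ← sum_neg_distrib, add_comm 1]

end AltBinomSum

section Absorption

variable {K : Type*} [Field K] [CharZero K]

lemma altBinomSum_div_succ (F : ℕ → K) (n : ℕ) :
    altBinomSum (fun k => F (k + 1) / (k + 1)) n = (F 0 - altBinomSum F (n + 1)) / (n + 1) := by
  have absorb (k : ℕ) : (n + 1) * (n.choose k : K) / (k + 1) = ((n + 1).choose (k + 1) : K) := by
    rw [div_eq_iff (Nat.cast_add_one_ne_zero k)]
    exact_mod_cast Nat.add_one_mul_choose_eq n k
  have hterm : ∀ k ∈ range (n + 1), (-1) ^ k * (n.choose k : K) * (F (k + 1) / (k + 1)) * (n + 1) =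
      -((-1) ^ (k + 1) * ((n + 1).choose (k + 1) : K) * F (k + 1)) := by
    intro k _
    rw [← absorb]
    ring
  rw [eq_div_iff (Nat.cast_add_one_ne_zero n), altBinomSum, altBinomSum, sum_range_succ' _ (n + 1),
    sum_mul, sum_congr rfl hterm]
  simp

lemma altBinomSum_one_div_succ (n : ℕ) :
    altBinomSum (fun k => 1 / ((k : K) + 1)) n = 1 / (n + 1) := by
  simpa [altBinomSum_const_succ] using altBinomSum_div_succ (fun _ => (1 : K)) n

end Absorption

lemma H_zero : H 0 = 0 := by
  simp [H]

lemma H_succ (m : ℕ) : H (m + 1) = H m + 1 / (m + 1) := by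
  simp [H, sum_range_succ]

lemma H2_succ (m : ℕ) : H2 (m + 1) = H2 m + 1 / ((m : ℝ) + 1) ^ 2 := by
  simp [H2, sum_range_succ]

-- also at `j = 0`, where `1 / 0 = 0` and `0 - 1 = 0`
lemma H_sub_one (j : ℕ) : H (j - 1) = H j - 1 / j := by
  cases j with
  | zero => simp [H_zero]
  | succ i => rw [H_succ]; push_cast; ring

lemma altBinomSum_one_div (n : ℕ) : altBinomSum (fun k => 1 / (k : ℝ)) n = -H n := by
  induction n with
  | zero => simp [H_zero]
  | succ n ih =>
    rw [altBinomSum_succ, ih]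
    push_cast
    rw [altBinomSum_one_div_succ, H_succ]
    ring

lemma altBinomSum_H (n : ℕ) : altBinomSum H n = -1 / n := by
  cases n with
  | zero => simp [H_zero]
  | succ n =>
    simp only [altBinomSum_succ, H_succ, altBinomSum_add, altBinomSum_one_div_succ]
    push_cast
    ring

lemma altBinomSum_one_div_sq (n : ℕ) :
    altBinomSum (fun k => 1 / (k : ℝ) ^ 2) n = -(H n ^ 2 + H2 n) / 2 := by
  induction n with
  | zero => simp [H_zero, H2]
  | succ n ih =>
    have hshift : (fun k : ℕ => 1 / ((k + 1 : ℕ) : ℝ) ^ 2) =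
        fun k => 1 / ((k + 1 : ℕ) : ℝ) / (k + 1) := by
      funext k; push_cast; rw [div_div, sq]
    rw [altBinomSum_succ, ih, hshift, altBinomSum_div_succ (fun j => 1 / (j : ℝ)),
      altBinomSum_one_div, H_succ, H2_succ]
    field_simp
    push_cast
    ring

lemma altBinomSum_H_div (n : ℕ) : altBinomSum (fun k => H k / k) n = -H2 n := by
  induction n with
  | zero => simp [H_zero, H2]
  | succ n ih =>
    rw [altBinomSum_succ, ih]
    push_cast
    rw [altBinomSum_div_succ H, altBinomSum_H, H_zero, H2_succ]
    push_cast
    field_simp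
    ring

lemma altBinomSum_H_sq (n : ℕ) : altBinomSum (fun k => H k ^ 2) n = H n / n - 2 / n ^ 2 := by
  cases n with
  | zero => simp [H_zero]
  | succ n =>
    have hshift : (fun k => H (k + 1) ^ 2) =
        fun k => H k ^ 2 + (2 * H (k + 1) - 1 / ((k + 1 : ℕ) : ℝ)) / (k + 1) := by
      funext k; rw [H_succ]; push_cast; field_simp; ring
    rw [altBinomSum_succ, hshift, altBinomSum_add,
      altBinomSum_div_succ (fun j => 2 * H j - 1 / (j : ℝ)), altBinomSum_sub,
      altBinomSum_const_mul, altBinomSum_H, altBinomSum_one_div, H_zero]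
    push_cast
    field_simp
    ring

lemma altBinomSum_H_sub_one_sq (n : ℕ) :
    altBinomSum (fun k => H (k - 1) ^ 2) n =
      H n / n - 2 / n ^ 2 + (3 * H2 n - H n ^ 2) / 2 := by
  have hexpand : (fun k => H (k - 1) ^ 2) =
      fun k => H k ^ 2 - 2 * (H k / k) + 1 / (k : ℝ) ^ 2 := by
    funext k; rw [H_sub_one]; ring
  rw [hexpand, altBinomSum_add, altBinomSum_sub, altBinomSum_const_mul, altBinomSum_H_sq,
    altBinomSum_H_div, altBinomSum_one_div_sq]
  ring

theorem stmt_8 (n : ℕ) :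
    ∑ k ∈ Icc 1 n, (-1 : ℝ) ^ (k - 1) * ((Nat.choose n k : ℝ) / ((k : ℝ) + 1)) * H k ^ 2 =
      (3 * H2 n - H n ^ 2) / (2 * ((n : ℝ) + 1)) := by
  have habsorb := altBinomSum_div_succ (fun j => H (j - 1) ^ 2) n
  simp only [Nat.add_sub_cancel] at habsorb
  calc ∑ k ∈ Icc 1 n, (-1 : ℝ) ^ (k - 1) * ((Nat.choose n k : ℝ) / ((k : ℝ) + 1)) * H k ^ 2
      = ∑ k ∈ Icc 1 n, (-1 : ℝ) ^ (k - 1) * (n.choose k : ℝ) * (H k ^ 2 / (k + 1)) :=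
        sum_congr rfl fun k _ => by ring
    _ = altBinomSum (fun j => H (j - 1) ^ 2) (n + 1) / (n + 1) := by
        rw [sum_Icc_neg_one_pow_pred_mul_choose _ (by simp [H_zero]), habsorb, H_zero]
        ring
    _ = (3 * H2 n - H n ^ 2) / (2 * ((n : ℝ) + 1)) := by
        rw [altBinomSum_H_sub_one_sq]
        push_cast
        rw [H_succ, H2_succ]
        field_simp
        ring
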